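/- Let ι : ℂ⁵ → ℂ⁵ be the invertible linear map ι(x₁,x₂,x₃,x₄,x₅) = (x₃, x₄, x₁, x₂, −x₁−x₂−x₃−x₄−x₅). Then the quadratic form q = Σ_{1≤i≤j≤5} xᵢxⱼ satisfies q∘ι = q (so ι preserves X₂), and the subgroup Γ′ of GL(ℂ⁵) generated by g₁, g₂ and ι is isomorphic to the symmetric group 𝔖₅ and contains Γ as a subgroup of index 2. -/

import Mathlib

open Projectivization MvPolynomial

noncomputable section
set_option linter.unnecessarySeqFocus false

/-- ℂ⁵ -/
abbrev V5 : Type := Fin 5 → ℂ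

/-- ℙ⁴ = ℙ(ℂ⁵) -/
abbrev P4 : Type := Projectivization ℂ V5

/-- g₁(x₁,…,x₅) = (x₄, x₁, x₅, x₂, −x₁−x₂−x₃−x₄−x₅). -/
def g1 : V5 ≃ₗ[ℂ] V5 where
  toFun x := ![x 3, x 0, x 4, x 1, -(x 0 + x 1 + x 2 + x 3 + x 4)]
  map_add' a b := by funext i; fin_cases i <;> simp <;> ring
  map_smul' c a := by funext i; fin_cases i <;> simp <;> ring
  invFun y := ![y 1, y 3, -(y 0 + y 1 + y 2 + y 3 + y 4), y 0, y 2]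
  left_inv x := by funext i; fin_cases i <;> simp <;> ring
  right_inv y := by funext i; fin_cases i <;> simp <;> ring

/-- g₂(x₁,…,x₅) = (x₄, −x₁−x₂−x₃−x₄−x₅, x₁, x₃, x₂). -/
def g2 : V5 ≃ₗ[ℂ] V5 where
  toFun x := ![x 3, -(x 0 + x 1 + x 2 + x 3 + x 4), x 0, x 2, x 1]
  map_add' a b := by funext i; fin_cases i <;> simp <;> ring
  map_smul' c a := by funext i; fin_cases i <;> simp <;> ring
  invFun y := ![y 2, y 4, y 3, y 0, -(y 0 + y 1 + y 2 + y 3 + y 4)]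
  left_inv x := by funext i; fin_cases i <;> simp <;> ring
  right_inv y := by funext i; fin_cases i <;> simp <;> ring

/-- Γ ⊂ GL(ℂ⁵) is the subgroup generated by g₁ and g₂. -/
def Gamma : Subgroup (V5 ≃ₗ[ℂ] V5) := Subgroup.closure {g1, g2}

/-- The induced map on ℙ⁴ of a linear automorphism of ℂ⁵. -/
def projMap (γ : V5 ≃ₗ[ℂ] V5) : P4 → P4 :=
  Projectivization.map γ.toLinearMap γ.injective

/-- The Γ-orbit of a point of ℙ⁴. -/
def GammaOrbit (p : P4) : Set P4 :=
  { q | ∃ γ ∈ Gamma, q = projMap γ p }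

/-- The quadratic form q = Σ_{1≤i≤j≤5} xᵢxⱼ. -/
def qQ (v : V5) : ℂ := ∑ i, ∑ j, if i ≤ j then v i * v j else 0

/-- The quadric threefold X₂ = {q = 0} ⊂ ℙ⁴. -/
def X2 : Set P4 :=
  { p | ∃ (v : V5) (hv : v ≠ 0), p = Projectivization.mk ℂ v hv ∧ qQ v = 0 }

/-- ι(x₁,…,x₅) = (x₃, x₄, x₁, x₂, −x₁−x₂−x₃−x₄−x₅). -/
def iota : V5 ≃ₗ[ℂ] V5 where
  toFun x := ![x 2, x 3, x 0, x 1, -(x 0 + x 1 + x 2 + x 3 + x 4)]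
  map_add' a b := by funext i; fin_cases i <;> simp <;> ring
  map_smul' c a := by funext i; fin_cases i <;> simp <;> ring
  invFun y := ![y 2, y 3, y 0, y 1, -(y 0 + y 1 + y 2 + y 3 + y 4)]
  left_inv x := by funext i; fin_cases i <;> simp <;> ring
  right_inv y := by funext i; fin_cases i <;> simp <;> ring

/-- Γ′ = ⟨g₁, g₂, ι⟩ ⊂ GL(ℂ⁵). -/
def Gamma' : Subgroup (V5 ≃ₗ[ℂ] V5) := Subgroup.closure {g1, g2, iota}

/-!
Write `x₆ = -(x₁ + ⋯ + x₅)`. Then `ℂ⁵` is the sum-zero hyperplane of `ℂ⁶`, `g₁`, `g₂` and `ι`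
permute the six coordinates, and `2q = x₁² + ⋯ + x₆²` is invariant under all of `𝔖₆`. Letting
`𝔖₅` act by conjugation on its six Sylow `5`-subgroups gives an injective homomorphism
`𝔖₅ → 𝔖₆` sending `(0 1 2)`, `(2 3 4)`, `(0 4)` to these three coordinate permutations. Since
`(0 1 2)(2 3 4)` is a `5`-cycle, those three elements generate `𝔖₅`, so `Γ′` is a faithful image
of `𝔖₅`, and `Γ` is the image of the subgroup generated by the two `3`-cycles, which has
index `2` because conjugation by `(0 4)` normalises it.
-/

open Equiv Function Subgroup

theorem Subgroup.index_eq_two_of_closure_insert {G : Type*} [Group G] {H : Subgroup G}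
    {S : Set G} {t : G} (hgen : closure (insert t S) = ⊤) (hS : S ⊆ H) (ht : t * t = 1)
    (hconj : ∀ s ∈ S, t * s * t ∈ H) (htH : t ∉ H) : H.index = 2 := by
  have ht' : t⁻¹ = t := inv_eq_of_mul_eq_one_right ht
  -- `H ∪ H t` is stable under right multiplication by the generators, hence is all of `G`.
  have step_t : ∀ x, x ∈ H ∨ x * t ∈ H → x * t ∈ H ∨ x * t * t ∈ H := fun x hx => by
    rw [mul_assoc, ht, mul_one]
    exact hx.symm
  have step : ∀ x y, y ∈ H → t * y * t ∈ H → x ∈ H ∨ x * t ∈ H → x * y ∈ H ∨ x * y * t ∈ H := by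
    intro x y hy hty hx
    refine hx.imp (fun hx => H.mul_mem hx hy) fun hx => ?_
    have : x * y * t = x * t * (t * y * t) := calc
      x * y * t = x * (t * t) * y * t := by rw [ht, mul_one]
      _ = x * t * (t * y * t) := by group
    exact this ▸ H.mul_mem hx hty
  have hcover : ∀ b, b ∈ H ∨ b * t ∈ H := by
    intro b
    have hb : b ∈ closure (insert t S) := hgen ▸ mem_top b
    induction hb using closure_induction_right with
    | one => exact .inl H.one_mem
    | mul_right x _ y hy ih =>
      rcases hy with rfl | hy
      exacts [step_t x ih, step x y (hS hy) (hconj y hy) ih]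
    | mul_inv_cancel x _ y hy ih =>
      rcases hy with rfl | hy
      · rw [ht']
        exact step_t x ih
      · refine step x y⁻¹ (H.inv_mem (hS hy)) ?_ ih
        have : t * y⁻¹ * t = (t * y * t)⁻¹ := by simp [mul_assoc, ht']
        exact this ▸ H.inv_mem (hconj y hy)
  refine index_eq_two_iff.2 ⟨t, fun b => ?_⟩
  rcases hcover b with hb | hb
  · exact .inr ⟨hb, fun hbt => htH (by simpa using H.mul_mem (H.inv_mem hb) hbt)⟩
  · exact .inl ⟨hb, fun hb' => htH (by simpa using H.mul_mem (H.inv_mem hb') hb)⟩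

section StandardRepresentation

variable {R : Type*} [CommRing R] {n : ℕ}

def sumZeroExtend : (Fin n → R) →ₗ[R] (Fin (n + 1) → R) where
  toFun x := Fin.snoc x (-∑ i, x i)
  map_add' x y := by
    ext j
    induction j using Fin.lastCases <;> simp [Finset.sum_add_distrib, add_comm]
  map_smul' r x := by
    ext j
    induction j using Fin.lastCases <;> simp [Finset.mul_sum]

@[simp]
lemma sumZeroExtend_castSucc (x : Fin n → R) (i : Fin n) : sumZeroExtend x i.castSucc = x i := by
  simp [sumZeroExtend]

@[simp]
lemma sumZeroExtend_last (x : Fin n → R) : sumZeroExtend x (Fin.last n) = -∑ i, x i := by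
  simp [sumZeroExtend]

lemma sum_sumZeroExtend (x : Fin n → R) : ∑ j, sumZeroExtend x j = 0 := by
  simp [Fin.sum_univ_castSucc]

lemma sumZeroExtend_init {y : Fin (n + 1) → R} (hy : ∑ j, y j = 0) :
    sumZeroExtend (Fin.init y) = y := by
  ext j
  induction j using Fin.lastCases with
  | last =>
    rw [Fin.sum_univ_castSucc] at hy
    simp only [sumZeroExtend_last, Fin.init]
    linear_combination -hy
  | cast i => simp [Fin.init]

lemma sumZeroExtend_injective : Injective (sumZeroExtend (R := R) (n := n)) :=
  fun x y h => funext fun i => by simpa using congrFun h i.castSucc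

def stdRepLin (σ : Perm (Fin (n + 1))) : Module.End R (Fin n → R) :=
  LinearMap.funLeft R R Fin.castSucc ∘ₗ LinearMap.funLeft R R ⇑σ⁻¹ ∘ₗ sumZeroExtend

lemma sumZeroExtend_stdRepLin (σ : Perm (Fin (n + 1))) (x : Fin n → R) :
    sumZeroExtend (stdRepLin σ x) = sumZeroExtend x ∘ ⇑σ⁻¹ :=
  sumZeroExtend_init (by rw [Equiv.sum_comp σ⁻¹ (sumZeroExtend x), sum_sumZeroExtend])

def stdRepEnd : Perm (Fin (n + 1)) →* Module.End R (Fin n → R) where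
  toFun := stdRepLin
  map_one' := LinearMap.ext fun x => sumZeroExtend_injective <| by
    rw [sumZeroExtend_stdRepLin]; rfl
  map_mul' σ τ := LinearMap.ext fun x => sumZeroExtend_injective <| by
    simp only [Module.End.mul_apply, sumZeroExtend_stdRepLin, mul_inv_rev]; rfl

/-- The standard representation of `𝔖ₙ₊₁` on the sum-zero hyperplane of `Rⁿ⁺¹`, written in the
first `n` coordinates. -/
def stdRep : Perm (Fin (n + 1)) →* ((Fin n → R) ≃ₗ[R] (Fin n → R)) :=
  (LinearMap.GeneralLinearGroup.generalLinearEquiv R _).toMonoidHom.comp stdRepEnd.toHomUnits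

lemma stdRep_apply (σ : Perm (Fin (n + 1))) (x : Fin n → R) (i : Fin n) :
    stdRep σ x i = sumZeroExtend x (σ⁻¹ i.castSucc) := rfl

lemma stdRep_apply_of_eq_castSucc {σ : Perm (Fin (n + 1))} {i j : Fin n}
    (h : σ⁻¹ i.castSucc = j.castSucc) (x : Fin n → R) : stdRep σ x i = x j := by
  rw [stdRep_apply, h, sumZeroExtend_castSucc]

lemma stdRep_apply_of_eq_last {σ : Perm (Fin (n + 1))} {i : Fin n}
    (h : σ⁻¹ i.castSucc = Fin.last n) (x : Fin n → R) : stdRep σ x i = -∑ j, x j := by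
  rw [stdRep_apply, h, sumZeroExtend_last]

lemma sumZeroExtend_stdRep (σ : Perm (Fin (n + 1))) (x : Fin n → R) :
    sumZeroExtend (stdRep σ x) = sumZeroExtend x ∘ ⇑σ⁻¹ :=
  sumZeroExtend_stdRepLin σ x

lemma stdRep_injective [NeZero (2 : R)] : Injective (stdRep (R := R) (n := n)) := by
  refine (injective_iff_map_eq_one _).2 fun σ hσ => ?_
  have hfix : ∀ y : Fin (n + 1) → R, ∑ j, y j = 0 → y ∘ ⇑σ⁻¹ = y := fun y hy => by
    rw [← sumZeroExtend_init hy, ← sumZeroExtend_stdRep, hσ]; rfl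
  rw [← inv_eq_one]
  refine Equiv.ext fun a => by_contra fun hne => NeZero.ne (2 : R) ?_
  have hne : σ⁻¹ a ≠ a := hne
  have := congrFun (hfix (Pi.single a 1 - Pi.single (σ⁻¹ a) 1) (by simp)) a
  simp only [comp_apply, Pi.sub_apply, Pi.single_eq_same, Pi.single_eq_of_ne hne,
    Pi.single_eq_of_ne hne.symm] at this
  linear_combination -this

end StandardRepresentation

instance : Fact (Nat.Prime 5) := ⟨Nat.prime_five⟩

/-- A generator of each of the six Sylow `5`-subgroups of `𝔖₅`, numbered so that the conjugation
action of `(0 1 2)`, `(2 3 4)`, `(0 4)` on them is the coordinate permutation behind `g₁`, `g₂`,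
`ι`. -/
def fiveCycle : Fin 6 → Perm (Fin 5) :=
  ![c[0, 1, 2, 4, 3], c[0, 1, 4, 2, 3], c[0, 1, 3, 2, 4], c[0, 1, 4, 3, 2], c[0, 1, 2, 3, 4],
    c[0, 1, 3, 4, 2]]

set_option maxRecDepth 10000 in
lemma orderOf_fiveCycle (k : Fin 6) : orderOf (fiveCycle k) = 5 :=
  orderOf_eq_prime (by revert k; decide) (by revert k; decide)

def fiveCyclePowers (k : Fin 6) : Finset (Perm (Fin 5)) :=
  (Finset.range 5).image (fiveCycle k ^ ·)

lemma mem_zpowers_fiveCycle_iff {g : Perm (Fin 5)} {k : Fin 6} :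
    g ∈ zpowers (fiveCycle k) ↔ g ∈ fiveCyclePowers k := by
  rw [mem_zpowers_iff_mem_range_orderOf, orderOf_fiveCycle]
  rfl

lemma index_zpowers_fiveCycle (k : Fin 6) : (zpowers (fiveCycle k)).index = 24 := by
  have h := (zpowers (fiveCycle k)).index_mul_card
  rw [Nat.card_zpowers, orderOf_fiveCycle, Nat.card_perm, Nat.card_eq_fintype_card,
    Fintype.card_fin] at h
  norm_num [Nat.factorial] at h
  omega

def sylowFive (k : Fin 6) : Sylow 5 (Perm (Fin 5)) :=
  IsPGroup.toSylow (P := zpowers (fiveCycle k))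
    (IsPGroup.of_card (n := 1) (by rw [Nat.card_zpowers, orderOf_fiveCycle, pow_one]))
    (by rw [index_zpowers_fiveCycle]; norm_num)

lemma coe_sylowFive (k : Fin 6) :
    (sylowFive k : Subgroup (Perm (Fin 5))) = zpowers (fiveCycle k) := rfl

lemma smul_sylowFive_eq_iff {g : Perm (Fin 5)} {k j : Fin 6} :
    g • sylowFive k = sylowFive j ↔ g * fiveCycle k * g⁻¹ ∈ zpowers (fiveCycle j) := by
  have hsmul : ((g • sylowFive k : Sylow 5 _) : Subgroup (Perm (Fin 5))) =
      zpowers (g * fiveCycle k * g⁻¹) := by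
    rw [Sylow.coe_subgroup_smul, coe_sylowFive, pointwise_smul_def]
    exact MonoidHom.map_zpowers _ _
  rw [← zpowers_le, ← hsmul, ← coe_sylowFive]
  exact ⟨fun h => h.le,
    fun h => Sylow.ext ((g • sylowFive k).is_maximal' (sylowFive j).isPGroup' h).symm⟩

lemma sylowFive_injective : Injective sylowFive := by
  have key : ∀ j k : Fin 6, fiveCycle j ∈ fiveCyclePowers k → j = k := by
    decide
  intro j k h
  apply key
  rw [← mem_zpowers_fiveCycle_iff, ← coe_sylowFive, ← h]
  exact mem_zpowers _

lemma card_sylow_five_perm_five : Nat.card (Sylow 5 (Perm (Fin 5))) = 6 := by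
  have hge : 6 ≤ Nat.card (Sylow 5 (Perm (Fin 5))) := by
    simpa using Nat.card_le_card_of_injective sylowFive sylowFive_injective
  have hdvd : Nat.card (Sylow 5 (Perm (Fin 5))) ∣ 24 :=
    index_zpowers_fiveCycle 0 ▸ coe_sylowFive 0 ▸ Sylow.card_dvd_index (sylowFive 0)
  have hmod := card_sylow_modEq_one 5 (Perm (Fin 5))
  have hle := Nat.le_of_dvd (by norm_num) hdvd
  interval_cases h : Nat.card (Sylow 5 (Perm (Fin 5))) <;> simp_all [Nat.ModEq]

def sylowFiveEquiv : Fin 6 ≃ Sylow 5 (Perm (Fin 5)) :=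
  .ofBijective sylowFive
    (sylowFive_injective.bijective_of_nat_card_le
      (by rw [card_sylow_five_perm_five, Nat.card_eq_fintype_card, Fintype.card_fin]))

def exoticEmbedding : Perm (Fin 5) →* Perm (Fin 6) :=
  sylowFiveEquiv.symm.permCongrHom.toMonoidHom.comp (MulAction.toPermHom _ _)

lemma exoticEmbedding_eq_iff {g : Perm (Fin 5)} {t : Perm (Fin 6)} :
    exoticEmbedding g = t ↔ ∀ k, g * fiveCycle k * g⁻¹ ∈ zpowers (fiveCycle (t k)) := by
  simp only [← smul_sylowFive_eq_iff, Equiv.ext_iff]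
  refine forall_congr' fun k => ?_
  exact sylowFiveEquiv.symm_apply_eq

lemma exoticEmbedding_injective : Injective exoticEmbedding := by
  have key : ∀ g : Perm (Fin 5),
      (∀ k, g * fiveCycle k * g⁻¹ ∈ fiveCyclePowers k) → g = 1 := by
    decide +kernel
  refine (injective_iff_map_eq_one _).2 fun g hg => key g fun k => ?_
  exact mem_zpowers_fiveCycle_iff.1 (exoticEmbedding_eq_iff.1 hg k)

lemma exoticEmbedding_cycle012 : exoticEmbedding c[0, 1, 2] = c[0, 1, 3] * c[2, 5, 4] :=
  exoticEmbedding_eq_iff.2 fun k => mem_zpowers_fiveCycle_iff.2 (by revert k; decide)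

lemma exoticEmbedding_cycle234 : exoticEmbedding c[2, 3, 4] = c[0, 2, 3] * c[1, 4, 5] :=
  exoticEmbedding_eq_iff.2 fun k => mem_zpowers_fiveCycle_iff.2 (by revert k; decide)

lemma exoticEmbedding_swap : exoticEmbedding (swap 0 4) = swap 0 2 * swap 1 3 * swap 4 5 :=
  exoticEmbedding_eq_iff.2 fun k => mem_zpowers_fiveCycle_iff.2 (by revert k; decide)


def exoticRep : Perm (Fin 5) →* (V5 ≃ₗ[ℂ] V5) := stdRep.comp exoticEmbedding

lemma exoticRep_injective : Injective exoticRep :=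
  stdRep_injective.comp exoticEmbedding_injective

lemma exoticRep_cycle012 : exoticRep c[0, 1, 2] = g1 := by
  refine LinearEquiv.ext fun x => funext fun i => ?_
  rw [exoticRep, MonoidHom.comp_apply, exoticEmbedding_cycle012]
  fin_cases i
  all_goals first
    | exact stdRep_apply_of_eq_castSucc (by decide) x
    | exact (stdRep_apply_of_eq_last (by decide) x).trans (by simp [g1, Fin.sum_univ_five])

lemma exoticRep_cycle234 : exoticRep c[2, 3, 4] = g2 := by
  refine LinearEquiv.ext fun x => funext fun i => ?_
  rw [exoticRep, MonoidHom.comp_apply, exoticEmbedding_cycle234]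
  fin_cases i
  all_goals first
    | exact stdRep_apply_of_eq_castSucc (by decide) x
    | exact (stdRep_apply_of_eq_last (by decide) x).trans (by simp [g2, Fin.sum_univ_five])

lemma exoticRep_swap : exoticRep (swap 0 4) = iota := by
  refine LinearEquiv.ext fun x => funext fun i => ?_
  rw [exoticRep, MonoidHom.comp_apply, exoticEmbedding_swap]
  fin_cases i
  all_goals first
    | exact stdRep_apply_of_eq_castSucc (by decide) x
    | exact (stdRep_apply_of_eq_last (by decide) x).trans (by simp [iota, Fin.sum_univ_five])

lemma two_mul_qQ (x : V5) : 2 * qQ x = ∑ j, sumZeroExtend x j ^ 2 := by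
  rw [Fin.sum_univ_castSucc, sumZeroExtend_last]
  simp only [sumZeroExtend_castSucc, qQ, Fin.sum_univ_five, Fin.isValue, nonpos_iff_eq_zero, ↓reduceIte, zero_le,
    one_ne_zero, Std.le_refl, zero_add, Fin.reduceLE, Fin.reduceEq, add_zero, neg_add_rev]
  ring

lemma qQ_stdRep (σ : Perm (Fin 6)) (x : V5) : qQ (stdRep σ x) = qQ x := by
  refine mul_left_cancel₀ (two_ne_zero (α := ℂ)) ?_
  rw [two_mul_qQ, two_mul_qQ, sumZeroExtend_stdRep]
  exact Equiv.sum_comp σ⁻¹ (sumZeroExtend x · ^ 2)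

lemma closure_cycle012_cycle234_swap :
    closure {c[0, 1, 2], c[2, 3, 4], swap 0 4} = (⊤ : Subgroup (Perm (Fin 5))) := by
  have hrot : c[0, 1, 2] * c[2, 3, 4] = finRotate 5 := by decide
  have htop := Perm.closure_prime_cycle_swap (by rw [Fintype.card_fin]; exact Nat.prime_five)
    isCycle_finRotate support_finRotate (⟨0, 4, by decide, rfl⟩ : Perm.IsSwap (swap (0 : Fin 5) 4))
  rw [eq_top_iff, ← htop, closure_le _, ← hrot]
  rintro _ (rfl | rfl)
  · exact mul_mem (subset_closure (by simp)) (subset_closure (by simp))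
  · exact subset_closure (by simp)

lemma index_closure_cycle012_cycle234 :
    (closure {c[0, 1, 2], c[2, 3, 4]} : Subgroup (Perm (Fin 5))).index = 2 := by
  set C : Subgroup (Perm (Fin 5)) := closure {c[0, 1, 2], c[2, 3, 4]}
  have h012 : c[0, 1, 2] ∈ C := subset_closure (by simp)
  have h234 : c[2, 3, 4] ∈ C := subset_closure (by simp)
  refine index_eq_two_of_closure_insert (t := swap 0 4) ?_ subset_closure (by decide) ?_ ?_
  · rw [← closure_cycle012_cycle234_swap, Set.insert_comm, Set.pair_comm, Set.insert_comm]
  · rintro _ (rfl | rfl)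
    · rw [show (swap 0 4 * c[0, 1, 2] * swap 0 4 : Perm (Fin 5)) =
          c[2, 3, 4]⁻¹ * c[0, 1, 2]⁻¹ * c[2, 3, 4] * c[0, 1, 2] by decide]
      exact mul_mem (mul_mem (mul_mem (inv_mem h234) (inv_mem h012)) h234) h012
    · rw [show (swap 0 4 * c[2, 3, 4] * swap 0 4 : Perm (Fin 5)) =
          c[2, 3, 4] * c[0, 1, 2] * c[2, 3, 4]⁻¹ * c[0, 1, 2]⁻¹ by decide]
      exact mul_mem (mul_mem (mul_mem h234 h012) (inv_mem h234)) (inv_mem h012)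
  · intro hswap
    have heven : C ≤ alternatingGroup (Fin 5) := (closure_le _).2 <| by
      rintro _ (rfl | rfl) <;> exact Perm.mem_alternatingGroup.2 (by decide)
    exact absurd (Perm.mem_alternatingGroup.1 (heven hswap)) (by decide)

lemma map_exoticRep_top : (⊤ : Subgroup (Perm (Fin 5))).map exoticRep = Gamma' := by
  rw [← closure_cycle012_cycle234_swap, MonoidHom.map_closure, Set.image_insert_eq,
    Set.image_insert_eq, Set.image_singleton, exoticRep_cycle012, exoticRep_cycle234,
    exoticRep_swap]
  rfl

lemma map_exoticRep_closure : (closure {c[0, 1, 2], c[2, 3, 4]}).map exoticRep = Gamma := by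
  rw [MonoidHom.map_closure, Set.image_insert_eq, Set.image_singleton, exoticRep_cycle012,
    exoticRep_cycle234]
  rfl

/-- ι preserves the quadratic form q (hence the quadric X₂), and Γ′ = ⟨g₁, g₂, ι⟩ is
isomorphic to 𝔖₅ and contains Γ as a subgroup of index 2. -/
theorem statement19 :
    (∀ v : V5, qQ (iota v) = qQ v) ∧
    Nonempty (Gamma' ≃* Equiv.Perm (Fin 5)) ∧
    Gamma ≤ Gamma' ∧ Subgroup.relIndex Gamma Gamma' = 2 := by
  refine ⟨fun v => ?_, ⟨?_⟩, ?_, ?_⟩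
  · rw [← exoticRep_swap, exoticRep, MonoidHom.comp_apply, qQ_stdRep]
  · have hrange : exoticRep.range = Gamma' := by rw [MonoidHom.range_eq_map, map_exoticRep_top]
    exact (MulEquiv.subgroupCongr hrange).symm.trans
      (MonoidHom.ofInjective exoticRep_injective).symm
  · exact closure_mono (Set.insert_subset_insert (Set.singleton_subset_iff.2 (by simp)))
  · rw [← map_exoticRep_closure, ← map_exoticRep_top,
      relIndex_map_map_of_injective _ _ exoticRep_injective, relIndex_top_right,
      index_closure_cycle012_cycle234]
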